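/- arXiv:2307.12095 — 3 statements merged into one kernel-verified Lean document; each statement's English description precedes it below -/
import Mathlib

section
/- Fix β ∈ (0,1) and let a, b > 0. The function u(t) = a·t₊ + b·t₋ (where t₊ = max(t,0), t₋ = max(-t,0)) is a C-viscosity solution of |t|^β u''(t) = 0 on (-1,1): for every C² test function φ touching u from above (resp. below) at a point t₀ ∈ (-1,1), one has |t₀|^β φ''(t₀) ≥ 0 (resp. ≤ 0). -/
open Real Set Filter Topology

/-- Second derivative test at a local min of `φ - c·t` for a `C²` function on an open set. -/
lemma aux_second_deriv_nonneg {φ : ℝ → ℝ} {s : Set ℝ} (hs : IsOpen s)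
    {t₀ : ℝ} (ht : t₀ ∈ s) (hφ : ContDiffOn ℝ 2 φ s) {c : ℝ}
    (hmin : IsLocalMin (fun t => φ t - c * t) t₀) : 0 ≤ deriv (deriv φ) t₀ := by
  have hφ1 : ContDiffOn ℝ 1 (deriv φ) s := hφ.deriv_of_isOpen hs (by norm_num)
  have hd : ∀ t ∈ s, DifferentiableAt ℝ φ t := fun t hts =>
    (hφ.contDiffAt (hs.mem_nhds hts)).differentiableAt two_ne_zero
  have hd' : DifferentiableAt ℝ (deriv φ) t₀ :=
    (hφ1.contDiffAt (hs.mem_nhds ht)).differentiableAt one_ne_zero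
  -- first derivative vanishes : deriv φ t₀ = c
  have hg0 : deriv (fun t => φ t - c * t) t₀ = 0 := hmin.deriv_eq_zero
  have hderiv : ∀ t ∈ s, deriv (fun t => φ t - c * t) t = deriv φ t - c := by
    intro t hts
    have h2 := ((hd t hts).hasDerivAt.sub ((hasDerivAt_id t).const_mul c)).deriv
    simpa [Pi.sub_def] using h2
  have hc : deriv φ t₀ = c := by
    have := hderiv t₀ ht
    rw [hg0] at this
    linarith
  by_contra h
  push_neg at h
  set L := deriv (deriv φ) t₀ with hL
  have hslope : Tendsto (slope (deriv φ) t₀) (𝓝[≠] t₀) (𝓝 L) :=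
    hasDerivAt_iff_tendsto_slope.1 hd'.hasDerivAt
  have hev : ∀ᶠ t in 𝓝[≠] t₀, slope (deriv φ) t₀ t < 0 :=
    hslope.eventually_lt_const h
  have hev2 : ∀ᶠ t in 𝓝[≠] t₀, t ∈ s ∧ φ t₀ - c * t₀ ≤ φ t - c * t :=
    ((hs.eventually_mem ht).and hmin).filter_mono nhdsWithin_le_nhds
  obtain ⟨δ, hδ, hδP⟩ := Metric.eventually_nhds_iff.1 (eventually_nhdsWithin_iff.1 (hev.and hev2))
  -- on (t₀, t₀ + δ) we have deriv φ t < c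
  set t₁ := t₀ + δ / 2 with ht₁
  have hIcc : ∀ t ∈ Icc t₀ t₁, dist t t₀ < δ := by
    intro t htI
    rw [Real.dist_eq, abs_sub_lt_iff]
    constructor <;> [skip; skip] <;>
      · rcases htI with ⟨h1, h2⟩; simp only [ht₁] at h2 ⊢; linarith
  have hIs : ∀ t ∈ Icc t₀ t₁, t ∈ s := by
    intro t htI
    rcases eq_or_ne t t₀ with rfl | hne
    · exact ht
    · exact (hδP (hIcc t htI) hne).2.1
  have hanti : StrictAntiOn (fun t => φ t - c * t) (Icc t₀ t₁) := by
    apply strictAntiOn_of_deriv_neg (convex_Icc _ _)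
    · exact fun t htI => ((hd t (hIs t htI)).sub (by fun_prop)).continuousAt.continuousWithinAt
    · intro t htI
      rw [interior_Icc] at htI
      have hne : t ≠ t₀ := ne_of_gt htI.1
      have hsl := (hδP (hIcc t ⟨htI.1.le, htI.2.le⟩) hne).1
      rw [slope_def_field, hc, div_neg_iff] at hsl
      have hdlt : deriv φ t - c < 0 := by
        rcases hsl with ⟨h1, h2⟩ | ⟨h1, h2⟩
        · linarith [sub_pos.2 htI.1]
        · exact h1
      rw [hderiv t (hIs t ⟨htI.1.le, htI.2.le⟩)]
      exact hdlt
  have ht₀t₁ : t₀ < t₁ := by simp only [ht₁]; linarith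
  have hlt : φ t₁ - c * t₁ < φ t₀ - c * t₀ :=
    hanti (left_mem_Icc.2 ht₀t₁.le) (right_mem_Icc.2 ht₀t₁.le) ht₀t₁
  have hge : φ t₀ - c * t₀ ≤ φ t₁ - c * t₁ :=
    (hδP (hIcc t₁ (right_mem_Icc.2 ht₀t₁.le)) (ne_of_gt ht₀t₁)).2.2
  linarith

lemma aux_second_deriv_nonpos {φ : ℝ → ℝ} {s : Set ℝ} (hs : IsOpen s)
    {t₀ : ℝ} (ht : t₀ ∈ s) (hφ : ContDiffOn ℝ 2 φ s) {c : ℝ}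
    (hmax : IsLocalMax (fun t => φ t - c * t) t₀) : deriv (deriv φ) t₀ ≤ 0 := by
  have hmin : IsLocalMin (fun t => (-φ) t - (-c) * t) t₀ := by
    have := hmax.neg
    simp only [Pi.neg_apply, neg_sub] at this ⊢
    convert this using 2 with t
    · rfl
    ring
  have := aux_second_deriv_nonneg hs ht hφ.neg hmin
  rw [show (deriv fun x => -φ x) = fun t => -deriv φ t from funext fun t => deriv.neg] at this
  rw [deriv.fun_neg] at this
  linarith

/-- `u(t) = a t₊ + b t₋` is a C-viscosity solution of `|t|^β u'' = 0` on `(-1,1)`: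
whenever a C² test function `φ` is such that `u - φ` has a local maximum
(resp. minimum) at `t₀ ∈ Ioo (-1) 1`, one has `|t₀|^β φ''(t₀) ≥ 0` (resp. `≤ 0`). -/
theorem c_viscosity_solution_degenerate_1d
    (β : ℝ) (hβ : β ∈ Ioo (0 : ℝ) 1) (a b : ℝ) (ha : 0 < a) (hb : 0 < b)
    (u : ℝ → ℝ) (hu : ∀ t, u t = a * max t 0 + b * max (-t) 0) :
    (∀ φ : ℝ → ℝ, ContDiffOn ℝ 2 φ (Ioo (-1 : ℝ) 1) →
      ∀ t₀ ∈ Ioo (-1 : ℝ) 1, IsLocalMax (fun t => u t - φ t) t₀ →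
        |t₀| ^ β * deriv (deriv φ) t₀ ≥ 0) ∧
    (∀ φ : ℝ → ℝ, ContDiffOn ℝ 2 φ (Ioo (-1 : ℝ) 1) →
      ∀ t₀ ∈ Ioo (-1 : ℝ) 1, IsLocalMin (fun t => u t - φ t) t₀ →
        |t₀| ^ β * deriv (deriv φ) t₀ ≤ 0) := by
  have hsopen : IsOpen (Ioo (-1 : ℝ) 1) := isOpen_Ioo
  -- near a nonzero t₀, u coincides with a linear function c·t
  have hlin : ∀ t₀ : ℝ, t₀ ≠ 0 → ∃ c : ℝ, ((∀ᶠ t in 𝓝 t₀, u t = c * t) ∧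
      (c = a ∨ c = -b)) := by
    intro t₀ ht₀
    rcases ht₀.lt_or_gt with hneg | hpos
    · refine ⟨-b, ?_, Or.inr rfl⟩
      filter_upwards [eventually_lt_nhds hneg] with t htlt
      rw [hu, max_eq_right htlt.le, max_eq_left (by linarith)]
      ring
    · refine ⟨a, ?_, Or.inl rfl⟩
      filter_upwards [eventually_gt_nhds hpos] with t htlt
      rw [hu, max_eq_left htlt.le, max_eq_right (by linarith)]
      ring
  constructor
  · intro φ hφ t₀ ht₀ hmax
    rcases eq_or_ne t₀ 0 with rfl | ht₀ne
    · rw [abs_zero, Real.zero_rpow hβ.1.ne', zero_mul]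
    · obtain ⟨c, hev, _⟩ := hlin t₀ ht₀ne
      have hmax' : IsLocalMax (fun t => c * t - φ t) t₀ := by
        refine hmax.congr ?_
        filter_upwards [hev] with t ht
        simp [ht]
      have hmin : IsLocalMin (fun t => φ t - c * t) t₀ := by
        have := hmax'.neg
        simpa [neg_sub] using this
      have h2 := aux_second_deriv_nonneg hsopen ht₀ hφ hmin
      have habs : (0:ℝ) < |t₀| ^ β := Real.rpow_pos_of_pos (abs_pos.2 ht₀ne) β
      exact mul_nonneg habs.le h2
  · intro φ hφ t₀ ht₀ hmin
    rcases eq_or_ne t₀ 0 with rfl | ht₀ne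
    · rw [abs_zero, Real.zero_rpow hβ.1.ne', zero_mul]
    · obtain ⟨c, hev, _⟩ := hlin t₀ ht₀ne
      have hmin' : IsLocalMin (fun t => c * t - φ t) t₀ := by
        refine hmin.congr ?_
        filter_upwards [hev] with t ht
        simp [ht]
      have hmax : IsLocalMax (fun t => φ t - c * t) t₀ := by
        have := hmin'.neg
        simpa [neg_sub] using this
      have h2 := aux_second_deriv_nonpos hsopen ht₀ hφ hmax
      have habs : (0:ℝ) < |t₀| ^ β := Real.rpow_pos_of_pos (abs_pos.2 ht₀ne) β
      exact mul_nonpos_of_nonneg_of_nonpos habs.le h2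
end

section
/- Fix β ∈ (0,1) and let a, b > 0. The function u(t) = a·t₊ + b·t₋ is NOT an L^p viscosity supersolution of |t|^β u'' = 0 on (-1,1): the function φ(t) = |t|^{2-β} belongs to W²ᵖ_loc(-1,1) for p < 1/β, u - (min(a,b))·φ appropriately scaled has a local minimum at 0 (indeed u - εφ has a local minimum at 0 for small ε > 0), yet ess lim inf_{t→0} |t|^β (εφ)''(t) = ε(2-β)(1-β) > 0. -/
open Real Set MeasureTheory

private lemma aux_integrable {s : ℝ} (hs : -1 < s) :
    IntegrableOn (fun x : ℝ => |x| ^ s) (Ioo (-1 : ℝ) 1) volume := by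
  have h1 : IntegrableOn (fun x : ℝ => |x| ^ s) (Ioo (0 : ℝ) 1) volume :=
    ((intervalIntegral.integrableOn_Ioo_rpow_iff one_pos).2 hs).congr_fun
      (fun x hx => by rw [abs_of_pos hx.1]) measurableSet_Ioo
  have h2 : IntegrableOn (fun x : ℝ => |x| ^ s) (Ioo (-1 : ℝ) 0) volume := by
    have key := (MeasurePreserving.integrableOn_comp_preimage
      (Measure.measurePreserving_neg (volume : Measure ℝ))
      (Homeomorph.neg ℝ).measurableEmbedding
      (f := fun x : ℝ => |x| ^ s) (s := Ioo (-1 : ℝ) 0)).1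
    have hpre : (Neg.neg ⁻¹' Ioo (-1 : ℝ) 0 : Set ℝ) = Ioo (0 : ℝ) 1 := by
      ext x
      simp only [mem_preimage, mem_Ioo]
      constructor <;> (rintro ⟨hx1, hx2⟩; constructor <;> linarith)
    apply key
    have : ((fun x : ℝ => |x| ^ s) ∘ (Neg.neg : ℝ → ℝ)) = fun x : ℝ => |x| ^ s := by
      funext x; simp [Function.comp, abs_neg]
    rw [this, hpre]
    exact h1
  have h3 : IntegrableOn (fun x : ℝ => |x| ^ s) (Ico (0 : ℝ) 1) volume :=
    (integrableOn_Ico_iff_integrableOn_Ioo).2 h1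
  refine (h2.union h3).mono_set ?_
  intro x hx
  rcases lt_or_ge x 0 with h | h
  · exact Or.inl ⟨hx.1, h⟩
  · exact Or.inr ⟨h, hx.2⟩

private lemma aux_deriv2 (c r : ℝ) (hr : 1 < r) {t : ℝ} (ht : t ≠ 0) :
    deriv (deriv (fun s : ℝ => c * |s| ^ r)) t = c * r * (r - 1) * |t| ^ (r - 2) := by
  rcases ht.lt_or_gt with htn | htp
  · -- t < 0
    have hmem : Iio (0 : ℝ) ∈ nhds t := Iio_mem_nhds htn
    have hEq : (fun s : ℝ => c * |s| ^ r) =ᶠ[nhds t] fun s : ℝ => c * (-s) ^ r := by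
      filter_upwards [hmem] with s hs
      rw [abs_of_neg hs]
    have hd1 : ∀ s : ℝ, s < 0 →
        deriv (fun x : ℝ => c * (-x) ^ r) s = -(c * r) * (-s) ^ (r - 1) := by
      intro s hs
      have h := ((hasDerivAt_neg s).rpow_const
        (p := r) (Or.inl (by simpa using hs.ne))).const_mul c
      rw [h.deriv]; ring
    have hEq2 : deriv (fun x : ℝ => c * (-x) ^ r) =ᶠ[nhds t]
        fun s : ℝ => -(c * r) * (-s) ^ (r - 1) := by
      filter_upwards [hmem] with s hs
      exact hd1 s hs
    have h2 : deriv (fun s : ℝ => -(c * r) * (-s) ^ (r - 1)) t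
        = c * r * (r - 1) * (-t) ^ (r - 2) := by
      have h := ((hasDerivAt_neg t).rpow_const
        (p := r - 1) (Or.inl (by simpa using htn.ne))).const_mul (-(c * r))
      rw [h.deriv, show r - 1 - 1 = r - 2 by ring]; ring
    rw [hEq.deriv.deriv_eq, hEq2.deriv_eq, h2, abs_of_neg htn]
  · -- 0 < t
    have hmem : Ioi (0 : ℝ) ∈ nhds t := Ioi_mem_nhds htp
    have hEq : (fun s : ℝ => c * |s| ^ r) =ᶠ[nhds t] fun s : ℝ => c * s ^ r := by
      filter_upwards [hmem] with s hs
      rw [abs_of_pos hs]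
    have hEq2 : deriv (fun x : ℝ => c * x ^ r) =ᶠ[nhds t]
        fun s : ℝ => c * r * s ^ (r - 1) := by
      filter_upwards [hmem] with s hs
      have h := ((hasDerivAt_id s).rpow_const (p := r) (Or.inl hs.ne')).const_mul c
      simp only [id] at h
      rw [h.deriv]; ring
    have h2 : deriv (fun s : ℝ => c * r * s ^ (r - 1)) t
        = c * r * (r - 1) * t ^ (r - 2) := by
      have h := ((hasDerivAt_id t).rpow_const
        (p := r - 1) (Or.inl htp.ne')).const_mul (c * r)
      simp only [id] at h
      rw [h.deriv, show r - 1 - 1 = r - 2 by ring]; ring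
    rw [hEq.deriv.deriv_eq, hEq2.deriv_eq, h2, abs_of_pos htp]

/-- `u(t) = a t₊ + b t₋` fails to be an `L^p` viscosity supersolution of
`|t|^β u'' = 0` on `(-1,1)`: the test function `φ(t)=|t|^{2-β}` lies in
`W^{2,p}_loc` for `p < 1/β`, `u - εφ` has a local minimum at `0` for small
`ε > 0`, yet `|t|^β (εφ)''(t) = ε(2-β)(1-β) > 0` for all `t ≠ 0`. -/
theorem not_Lp_viscosity_supersolution
    (β : ℝ) (hβ : β ∈ Ioo (0 : ℝ) 1) (a b : ℝ) (ha : 0 < a) (hb : 0 < b)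
    (u : ℝ → ℝ) (hu : ∀ t, u t = a * max t 0 + b * max (-t) 0) :
    (∀ p : ℝ, 1 ≤ p → p < 1 / β →
      MemLp (fun t : ℝ => (2 - β) * (1 - β) * |t| ^ (-β)) (ENNReal.ofReal p)
        (volume.restrict (Ioo (-1 : ℝ) 1))) ∧
    ∃ ε > (0 : ℝ),
      IsLocalMin (fun t => u t - ε * |t| ^ (2 - β)) 0 ∧
      (∀ t : ℝ, t ≠ 0 →
        deriv (deriv (fun s : ℝ => ε * |s| ^ (2 - β))) t
          = ε * (2 - β) * (1 - β) * |t| ^ (-β)) ∧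
      (∀ t : ℝ, t ≠ 0 →
        |t| ^ β * (ε * (2 - β) * (1 - β) * |t| ^ (-β)) = ε * (2 - β) * (1 - β)) ∧
      0 < ε * (2 - β) * (1 - β) := by
  obtain ⟨hβ0, hβ1⟩ := hβ
  have hC : (0 : ℝ) < (2 - β) * (1 - β) := by nlinarith
  constructor
  · -- Memℒp part
    intro p hp1 hp2
    have hp0 : 0 < p := lt_of_lt_of_le one_pos hp1
    have hP0 : (ENNReal.ofReal p) ≠ 0 := by
      simp [ENNReal.ofReal_eq_zero, not_le, hp0]
    have hPtop : (ENNReal.ofReal p) ≠ ⊤ := ENNReal.ofReal_ne_top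
    set f : ℝ → ℝ := fun t => (2 - β) * (1 - β) * |t| ^ (-β) with hf
    have hmeas : AEStronglyMeasurable f
        (volume.restrict (Ioo (-1 : ℝ) 1)) := by
      apply Measurable.aestronglyMeasurable
      fun_prop
    refine (memLp_norm_rpow_iff hmeas hP0 hPtop).1 ?_
    rw [ENNReal.div_self hP0 hPtop, memLp_one_iff_integrable]
    have htoReal : (ENNReal.ofReal p).toReal = p := ENNReal.toReal_ofReal hp0.le
    have hβp : β * p < 1 := by
      rw [lt_div_iff₀ hβ0] at hp2
      linarith [hp2]
    have hint : IntegrableOn (fun x : ℝ => |x| ^ (-(β * p))) (Ioo (-1 : ℝ) 1) volume :=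
      aux_integrable (by linarith)
    have : Integrable (fun x : ℝ => ((2 - β) * (1 - β)) ^ p * |x| ^ (-(β * p)))
        (volume.restrict (Ioo (-1 : ℝ) 1)) := hint.const_mul _
    apply this.congr
    filter_upwards with x
    rw [htoReal, hf]
    have habs : ‖(2 - β) * (1 - β) * |x| ^ (-β)‖ = (2 - β) * (1 - β) * |x| ^ (-β) := by
      rw [Real.norm_eq_abs, abs_of_nonneg]
      exact mul_nonneg hC.le (Real.rpow_nonneg (abs_nonneg x) _)
    rw [habs, Real.mul_rpow hC.le (Real.rpow_nonneg (abs_nonneg x) _),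
      ← Real.rpow_mul (abs_nonneg x), neg_mul]
  · -- viscosity part
    refine ⟨min a b, lt_min ha hb, ?_, ?_, ?_, ?_⟩
    · -- local min at 0
      have hF0 : u 0 - min a b * |(0 : ℝ)| ^ (2 - β) = 0 := by
        rw [hu 0]
        simp [Real.zero_rpow (by linarith : (2 : ℝ) - β ≠ 0)]
      rw [IsLocalMin, IsMinFilter]
      filter_upwards [Metric.ball_mem_nhds (0 : ℝ) one_pos] with t ht
      simp only [Metric.mem_ball, dist_zero_right, Real.norm_eq_abs] at ht
      rw [hF0]
      rcases eq_or_ne t 0 with rfl | htne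
      · rw [hF0]
      · have h1 : min a b * |t| ≤ u t := by
          rw [hu t]
          rcases le_total t 0 with h | h
          · have : |t| = max (-t) 0 := by
              rw [abs_of_nonpos h, max_eq_left (by linarith)]
            rw [this]
            have : min a b * max (-t) 0 ≤ b * max (-t) 0 :=
              mul_le_mul_of_nonneg_right (min_le_right a b) (le_max_right _ _)
            nlinarith [mul_nonneg ha.le (le_max_right t 0),
              max_eq_right h, this]
          · have habs : |t| = max t 0 := by
              rw [abs_of_nonneg h, max_eq_left h]
            rw [habs]
            have h2 : min a b * max t 0 ≤ a * max t 0 :=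
              mul_le_mul_of_nonneg_right (min_le_left a b) (le_max_right _ _)
            nlinarith [mul_nonneg hb.le (le_max_right (-t) 0)]
        have h2 : |t| ^ (2 - β) ≤ |t| := by
          have := Real.rpow_le_rpow_of_exponent_ge (abs_pos.2 htne) ht.le
            (by linarith : (1 : ℝ) ≤ 2 - β)
          simpa using this
        have h3 : min a b * |t| ^ (2 - β) ≤ min a b * |t| :=
          mul_le_mul_of_nonneg_left h2 (lt_min ha hb).le
        linarith
    · -- second derivative
      intro t ht
      have := aux_deriv2 (min a b) (2 - β) (by linarith) ht
      rw [this, show (2 : ℝ) - β - 1 = 1 - β by ring, show (2 : ℝ) - β - 2 = -β by ring]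
    · -- product identity
      intro t ht
      rw [show min a b * (2 - β) * (1 - β) * |t| ^ (-β)
        = |t| ^ (-β) * (min a b * (2 - β) * (1 - β)) by ring, ← mul_assoc,
        ← Real.rpow_add (abs_pos.2 ht)]
      simp
    · -- positivity
      have := lt_min ha hb
      nlinarith
end

section
/- Let U be open bounded with cl(U) ⊂ B₁ and u uniformly continuous on cl(U). Then u^ε converges to u uniformly on U as ε → 0⁺; more precisely, 0 < u^ε(x₀) − u(x₀) ≤ ρ(√(ε·osc_U u)) + ε for every x₀ ∈ U, where ρ is a modulus of continuity of u on cl(U). -/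
open Real Set Metric

/-- The upper eps-envelope `u^eps(x0) = sup over x in cl U of u x + eps - ‖x - x0‖^2/eps`. -/
noncomputable def upperEnv {d : ℕ} (U : Set (EuclideanSpace ℝ (Fin d)))
    (u : EuclideanSpace ℝ (Fin d) → ℝ) (ε : ℝ)
    (x₀ : EuclideanSpace ℝ (Fin d)) : ℝ :=
  sSup ((fun x => u x + ε - ‖x - x₀‖ ^ 2 / ε) '' closure U)

variable {d : ℕ}

/-- Uniform convergence of the envelopes as `ε → 0⁺`, with explicit modulus bound. -/
theorem upperEnv_tendstoUniformly
    (U : Set (EuclideanSpace ℝ (Fin d))) (hU : IsOpen U)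
    (hUb : Bornology.IsBounded U) (hUB : closure U ⊆ ball 0 1)
    (u : EuclideanSpace ℝ (Fin d) → ℝ) (hu : ContinuousOn u (ball 0 1))
    (ρ : ℝ → ℝ) (hρmono : MonotoneOn ρ (Ici 0))
    (hρ0 : Filter.Tendsto ρ (nhdsWithin 0 (Ioi 0)) (nhds 0))
    (hρ : ∀ x ∈ closure U, ∀ y ∈ closure U, |u x - u y| ≤ ρ ‖x - y‖) :
    TendstoUniformlyOn (fun ε x₀ => upperEnv U u ε x₀) u
      (nhdsWithin 0 (Ioi 0)) U ∧
    ∀ ε : ℝ, 0 < ε → ∀ x₀ ∈ U,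
      0 < upperEnv U u ε x₀ - u x₀ ∧
      upperEnv U u ε x₀ - u x₀ ≤
        ρ (Real.sqrt (ε * (sSup (u '' closure U) - sInf (u '' closure U)))) + ε := by
  rcases U.eq_empty_or_nonempty with rfl | hne
  · refine ⟨by simpa using (tendstoUniformlyOn_empty), ?_⟩
    intro ε hε x₀ hx₀
    exact absurd hx₀ (notMem_empty x₀)
  have hcl : IsCompact (closure U) := hUb.isCompact_closure
  have hucl : ContinuousOn u (closure U) := hu.mono hUB
  have hclne : (closure U).Nonempty := hne.closure
  have himg : IsCompact (u '' closure U) := hcl.image_of_continuousOn hucl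
  have hbddA : BddAbove (u '' closure U) := himg.bddAbove
  have hbddB : BddBelow (u '' closure U) := himg.bddBelow
  set M := sSup (u '' closure U) with hM
  set m := sInf (u '' closure U) with hm
  have hosc : 0 ≤ M - m :=
    sub_nonneg.2 (csInf_le_csSup (hclne.image u) hbddB hbddA)
  have huleM : ∀ x ∈ closure U, u x ≤ M := fun x hx => le_csSup hbddA ⟨x, hx, rfl⟩
  have hmleu : ∀ x ∈ closure U, m ≤ u x := fun x hx => csInf_le hbddB ⟨x, hx, rfl⟩
  have hρ0le : ∀ t, 0 ≤ t → 0 ≤ ρ t := by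
    intro t ht
    obtain ⟨z, hz⟩ := hclne
    have h0 : 0 ≤ ρ 0 := by
      have := hρ z hz z hz
      simpa using this
    exact h0.trans (hρmono (mem_Ici.2 le_rfl) (mem_Ici.2 ht) ht)
  have hSbdd : ∀ ε : ℝ, 0 < ε → ∀ x₀,
      BddAbove ((fun x => u x + ε - ‖x - x₀‖ ^ 2 / ε) '' closure U) := by
    intro ε hε x₀
    refine ⟨M + ε, ?_⟩
    rintro _ ⟨x, hx, rfl⟩
    have h1 : 0 ≤ ‖x - x₀‖ ^ 2 / ε := div_nonneg (sq_nonneg _) hε.le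
    have := huleM x hx
    simp only []
    linarith
  have hlow : ∀ ε : ℝ, 0 < ε → ∀ x₀ ∈ closure U,
      u x₀ + ε ≤ upperEnv U u ε x₀ := by
    intro ε hε x₀ hx₀
    have hmem : u x₀ + ε - ‖x₀ - x₀‖ ^ 2 / ε ∈
        (fun x => u x + ε - ‖x - x₀‖ ^ 2 / ε) '' closure U :=
      mem_image_of_mem _ hx₀
    have := le_csSup (hSbdd ε hε x₀) hmem
    simpa [upperEnv] using this
  have hupA : ∀ ε : ℝ, 0 < ε → ∀ x₀ ∈ closure U,
      upperEnv U u ε x₀ ≤ u x₀ + (ρ (Real.sqrt (ε * (M - m))) + ε) := by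
    intro ε hε x₀ hx₀
    apply csSup_le (hclne.image _)
    rintro _ ⟨x, hx, rfl⟩
    have hρnn : 0 ≤ ρ (Real.sqrt (ε * (M - m))) := hρ0le _ (Real.sqrt_nonneg _)
    by_cases hcase : ‖x - x₀‖ ≤ Real.sqrt (ε * (M - m))
    · have h1 : u x - u x₀ ≤ ρ ‖x - x₀‖ := (le_abs_self _).trans (hρ x hx x₀ hx₀)
      have h2 : ρ ‖x - x₀‖ ≤ ρ (Real.sqrt (ε * (M - m))) :=
        hρmono (mem_Ici.2 (norm_nonneg _)) (mem_Ici.2 (Real.sqrt_nonneg _)) hcase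
      have h3 : 0 ≤ ‖x - x₀‖ ^ 2 / ε := div_nonneg (sq_nonneg _) hε.le
      simp only []
      linarith
    · push_neg at hcase
      have hsq : Real.sqrt (ε * (M - m)) ^ 2 = ε * (M - m) :=
        Real.sq_sqrt (mul_nonneg hε.le hosc)
      have h1 : ε * (M - m) < ‖x - x₀‖ ^ 2 := by
        nlinarith [Real.sqrt_nonneg (ε * (M - m)), norm_nonneg (x - x₀)]
      have h2 : M - m ≤ ‖x - x₀‖ ^ 2 / ε := by
        rw [le_div_iff₀ hε]; nlinarith
      have h3 : u x - u x₀ ≤ M - m := by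
        have := huleM x hx
        have := hmleu x₀ hx₀
        linarith
      simp only []
      linarith
  have hupB : ∀ ε : ℝ, 0 < ε → ∀ x₀ ∈ closure U,
      upperEnv U u ε x₀ ≤ u x₀ + ((M - m) + ε) := by
    intro ε hε x₀ hx₀
    apply csSup_le (hclne.image _)
    rintro _ ⟨x, hx, rfl⟩
    have h3 : u x - u x₀ ≤ M - m := by
      have := huleM x hx
      have := hmleu x₀ hx₀
      linarith
    have h1 : 0 ≤ ‖x - x₀‖ ^ 2 / ε := div_nonneg (sq_nonneg _) hε.le
    simp only []
    linarith
  refine ⟨?_, ?_⟩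
  · rw [Metric.tendstoUniformlyOn_iff]
    intro η hη
    by_cases hosc0 : M - m = 0
    · have hmem : Ioo (0:ℝ) η ∈ nhdsWithin 0 (Ioi 0) :=
        Ioo_mem_nhdsGT_of_mem ⟨le_rfl, hη⟩
      filter_upwards [hmem] with ε hε x₀ hx₀
      have h1 := hlow ε hε.1 x₀ (subset_closure hx₀)
      have h2 := hupB ε hε.1 x₀ (subset_closure hx₀)
      have hε1 := hε.1
      have hε2 := hε.2
      rw [Real.dist_eq, abs_sub_comm, abs_of_nonneg (by linarith)]
      linarith
    · have hoscpos : 0 < M - m := lt_of_le_of_ne hosc (Ne.symm hosc0)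
      rw [Metric.tendsto_nhdsWithin_nhds] at hρ0
      obtain ⟨δ, hδ, hδρ⟩ := hρ0 (η / 2) (by linarith)
      set c := min (η / 2) (δ ^ 2 / (M - m)) with hc
      have hcpos : 0 < c := lt_min (by linarith) (div_pos (pow_pos hδ 2) hoscpos)
      have hmem : Ioo (0:ℝ) c ∈ nhdsWithin 0 (Ioi 0) :=
        Ioo_mem_nhdsGT_of_mem ⟨le_rfl, hcpos⟩
      filter_upwards [hmem] with ε hεc x₀ hx₀
      obtain ⟨hε, hεlt⟩ := hεc
      have h1 := hlow ε hε x₀ (subset_closure hx₀)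
      have h2 := hupA ε hε x₀ (subset_closure hx₀)
      have hs : Real.sqrt (ε * (M - m)) ∈ Ioi (0:ℝ) :=
        Real.sqrt_pos.2 (mul_pos hε hoscpos)
      have hsδ : dist (Real.sqrt (ε * (M - m))) 0 < δ := by
        rw [Real.dist_eq, sub_zero, abs_of_nonneg (Real.sqrt_nonneg _)]
        have hlt : ε * (M - m) < δ ^ 2 := by
          have h := (lt_min_iff.1 hεlt).2
          rw [lt_div_iff₀ hoscpos] at h
          linarith
        calc Real.sqrt (ε * (M - m)) < Real.sqrt (δ ^ 2) :=
              Real.sqrt_lt_sqrt (mul_nonneg hε.le hosc) hlt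
          _ = δ := by rw [Real.sqrt_sq hδ.le]
      have hρsmall := hδρ hs hsδ
      rw [Real.dist_eq, sub_zero] at hρsmall
      have hρlt : ρ (Real.sqrt (ε * (M - m))) < η / 2 :=
        (le_abs_self _).trans_lt hρsmall
      have hεη : ε < η / 2 := hεlt.trans_le (min_le_left _ _)
      rw [Real.dist_eq, abs_sub_comm, abs_of_nonneg (by linarith)]
      linarith
  · intro ε hε x₀ hx₀
    have hx₀' := subset_closure hx₀
    refine ⟨?_, ?_⟩
    · have := hlow ε hε x₀ hx₀'
      linarith
    · have := hupA ε hε x₀ hx₀'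
      linarith
end
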